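/- The matrices P_C and P_N admit the explicit representations P_C = Σ_{i=r+1}^{r+s} (1−σ_i²)⁻¹ Z̃_i Z̃_iᵀ − Σ_{i=r+1}^{r+s} σ_i(1−σ_i²)⁻¹ Z̃_i W̃_iᵀ + Σ_{i=r+s+1}^{p} Z̃_i Z̃_iᵀ and P_N = Σ_{i=r+1}^{r+s} (1−σ_i²)⁻¹ W̃_i W̃_iᵀ − Σ_{i=r+1}^{r+s} σ_i(1−σ_i²)⁻¹ W̃_i Z̃_iᵀ + Σ_{i=r+s+1}^{K} W̃_i W̃_iᵀ. -/

import Mathlib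

/-!
In the rotated bases `Z̃ = Z U`, `W̃ = W V` one has `Z̃ᵀ Z̃ = I`, `W̃ᵀ W̃ = I` and `Z̃ᵀ W̃ = Σ`, so the
Gram matrix of `M = (Z̃', W̃')` (the columns beyond `r`) is `[[I, D], [Dᵀ, I]]`, with `D` the
rectangular diagonal matrix of `σ_{r+1}, σ_{r+2}, …`. As these satisfy `σ_i² < 1`, its inverse is
`[[A, B], [Bᵀ, A']]` with `A`, `A'` diagonal with entries `(1 - σ_i²)⁻¹` and
`B = -diag (σ_i / (1 - σ_i²))` rectangular,
so `P_C = Z̃' A Z̃'ᵀ + Z̃' B W̃'ᵀ` is a sum of rank-one terms; the indices with `σ_i = 0` contribute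
`Z̃_i Z̃_iᵀ` to the first sum and nothing to the second. The same computation gives `P_N`.
-/

open Matrix

noncomputable def specNorm {m n : Type*} [Fintype m] [Fintype n] [DecidableEq n]
    (A : Matrix m n ℝ) : ℝ :=
  ‖LinearMap.toContinuousLinearMap (Matrix.toEuclideanLin A)‖

noncomputable def vnorm {n : Type*} [Fintype n] (v : n → ℝ) : ℝ :=
  Real.sqrt (∑ i, v i ^ 2)

open Finset

section NatCol

variable {m α : Type*} [Zero α] {q : ℕ}

def natCol (A : Matrix m (Fin q) α) (i : ℕ) : m → α :=
  fun a => if h : i < q then A a ⟨i, h⟩ else 0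

lemma natCol_of_lt (A : Matrix m (Fin q) α) {i : ℕ} (h : i < q) (a : m) :
    natCol A i a = A a ⟨i, h⟩ :=
  dif_pos h

lemma natCol_of_le (A : Matrix m (Fin q) α) {i : ℕ} (h : q ≤ i) : natCol A i = 0 :=
  funext fun _ => dif_neg (by omega)

lemma natCol_submatrix_shift {q' r : ℕ} (A : Matrix m (Fin q) α) (f : Fin q' → Fin q)
    (hf : ∀ j, (f j : ℕ) = r + j) (hq : r + q' = q) (i : ℕ) :
    natCol (A.submatrix id f) i = natCol A (r + i) := by
  by_cases hi : i < q'
  · ext a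
    rw [natCol_of_lt _ hi, natCol_of_lt _ (by omega), submatrix_apply, id]
    exact congrArg (A a) (Fin.ext (hf _))
  · rw [natCol_of_le _ (by omega), natCol_of_le _ (by omega)]

end NatCol

section RectDiagonal

variable {α : Type*}

def rectDiagonal [Zero α] (q k : ℕ) (d : ℕ → α) : Matrix (Fin q) (Fin k) α :=
  of fun i j => if (i : ℕ) = j then d i else 0

variable {q k l : ℕ}

lemma transpose_rectDiagonal [Zero α] (d : ℕ → α) :
    (rectDiagonal q k d)ᵀ = rectDiagonal k q d := by
  ext i j
  simp only [rectDiagonal, transpose_apply, of_apply, eq_comm (a := (j : ℕ))]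
  split_ifs with h <;> simp [h]

lemma rectDiagonal_congr [Zero α] {d e : ℕ → α} (h : ∀ i < min q k, d i = e i) :
    rectDiagonal q k d = rectDiagonal q k e := by
  ext i j
  simp only [rectDiagonal, of_apply]
  split_ifs with hij
  · exact h i (by omega)
  · rfl

lemma rectDiagonal_one [Zero α] [One α] : rectDiagonal q q (fun _ => (1 : α)) = 1 := by
  ext i j
  simp [rectDiagonal, one_apply, Fin.ext_iff]

lemma rectDiagonal_zero [Zero α] : rectDiagonal q k (fun _ => (0 : α)) = 0 := by
  ext i j
  simp [rectDiagonal]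

lemma rectDiagonal_add [AddZeroClass α] (d e : ℕ → α) :
    rectDiagonal q k d + rectDiagonal q k e = rectDiagonal q k (d + e) := by
  ext i j
  simp only [rectDiagonal, Matrix.add_apply, of_apply, Pi.add_apply]
  split_ifs <;> simp

lemma mul_rectDiagonal_apply [NonUnitalNonAssocSemiring α] {m : Type*}
    (X : Matrix m (Fin q) α) (d : ℕ → α) (a : m) (j : Fin k) :
    (X * rectDiagonal q k d) a j = natCol X j a * d j := by
  simp only [mul_apply, rectDiagonal, of_apply, mul_ite, mul_zero]
  by_cases hj : (j : ℕ) < q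
  · rw [Finset.sum_eq_single ⟨j, hj⟩ (fun t _ ht => if_neg (by simpa [Fin.ext_iff] using ht))
      (by simp), natCol_of_lt _ hj, if_pos rfl]
  · rw [Finset.sum_eq_zero (fun t _ => if_neg (by omega)), natCol_of_le _ (by omega)]
    simp

lemma rectDiagonal_mul_rectDiagonal [NonUnitalNonAssocSemiring α] (d e : ℕ → α) :
    rectDiagonal q k d * rectDiagonal k l e =
      rectDiagonal q l (fun i => if i < k then d i * e i else 0) := by
  ext i j
  rw [mul_rectDiagonal_apply]
  simp only [natCol, rectDiagonal, of_apply]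
  split_ifs <;> simp_all
  omega

lemma mul_rectDiagonal_mul_transpose [CommSemiring α] {m : Type*} [Fintype m]
    (X : Matrix m (Fin q) α) (Y : Matrix m (Fin k) α) (d : ℕ → α) :
    X * rectDiagonal q k d * Yᵀ = ∑ i ∈ range q, d i • vecMulVec (natCol X i) (natCol Y i) := by
  ext a b
  have hY : Y b = fun j : Fin k => natCol Y j b := funext fun j => (natCol_of_lt Y j.2 b).symm
  rw [mul_apply]
  simp only [mul_rectDiagonal_apply, transpose_apply, hY, Matrix.sum_apply, Matrix.smul_apply,
    vecMulVec_apply, smul_eq_mul]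
  rw [Fin.sum_univ_eq_sum_range (fun i => natCol X i a * d i * natCol Y i b)]
  have hmin : ∀ N, min q k ≤ N →
      ∑ i ∈ range N, natCol X i a * d i * natCol Y i b =
        ∑ i ∈ range (min q k), natCol X i a * d i * natCol Y i b := fun N hN =>
    (sum_subset (range_subset_range.2 hN) fun i _ hi => by
      simp only [mem_range, not_lt] at hi
      rcases le_or_gt q i with hq | hq
      · simp [natCol_of_le X hq]
      · simp [natCol_of_le Y (show k ≤ i by omega)]).symm
  rw [hmin k (min_le_right _ _), ← hmin q (min_le_left _ _)]
  exact sum_congr rfl fun i _ => by ring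

lemma submatrix_rectDiagonal_shift [Zero α] {q' k' r : ℕ} (d : ℕ → α) (f : Fin q' → Fin q)
    (g : Fin k' → Fin k) (hf : ∀ j, (f j : ℕ) = r + j) (hg : ∀ j, (g j : ℕ) = r + j) :
    (rectDiagonal q k d).submatrix f g = rectDiagonal q' k' (fun i => d (r + i)) := by
  ext i j
  simp only [rectDiagonal, submatrix_apply, of_apply, hf, hg, Nat.add_left_cancel_iff]

end RectDiagonal

theorem inv_fromBlocks_one_rectDiagonal {α : Type*} [Field α] {q k : ℕ} (d : ℕ → α)
    (hd : ∀ i, 1 - d i ^ 2 ≠ 0) (hzero : ∀ i, min q k ≤ i → d i = 0) :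
    (fromBlocks 1 (rectDiagonal q k d) (rectDiagonal k q d) 1)⁻¹ =
      fromBlocks (rectDiagonal q q fun i => (1 - d i ^ 2)⁻¹)
        (rectDiagonal q k fun i => -(d i / (1 - d i ^ 2)))
        (rectDiagonal k q fun i => -(d i / (1 - d i ^ 2)))
        (rectDiagonal k k fun i => (1 - d i ^ 2)⁻¹) := by
  apply inv_eq_right_inv
  rw [fromBlocks_multiply, ← fromBlocks_one]
  simp only [Matrix.one_mul, rectDiagonal_mul_rectDiagonal, rectDiagonal_add]
  congr 1 <;> first | rw [← rectDiagonal_one] | rw [← rectDiagonal_zero]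
  all_goals
    refine rectDiagonal_congr fun i hi => ?_
    have hdi := hd i
    simp only [Pi.add_apply]
    split_ifs with h
    · field_simp
      ring
    · simp [hzero i (by omega)]

lemma sum_range_shift_split_of_vanishing {𝕜 β : Type*} [Field 𝕜] [AddCommGroup β] [Module 𝕜 β]
    (σ : ℕ → 𝕜) (F G : ℕ → β) {r s a : ℕ} (hσ : ∀ i, r + s ≤ i → σ i = 0) (ha : r + s ≤ a) :
    ∑ i ∈ range (a - r), (1 - σ (r + i) ^ 2)⁻¹ • F (r + i)
        + ∑ i ∈ range (a - r), -(σ (r + i) / (1 - σ (r + i) ^ 2)) • G (r + i)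
      = ∑ i ∈ Ico r (r + s), (1 - σ i ^ 2)⁻¹ • F i
        - ∑ i ∈ Ico r (r + s), (σ i / (1 - σ i ^ 2)) • G i + ∑ i ∈ Ico (r + s) a, F i := by
  rw [← sum_Ico_eq_sum_range (fun i => (1 - σ i ^ 2)⁻¹ • F i),
    ← sum_Ico_eq_sum_range (fun i => -(σ i / (1 - σ i ^ 2)) • G i),
    ← sum_Ico_consecutive _ (Nat.le_add_right r s) ha,
    ← sum_Ico_consecutive _ (Nat.le_add_right r s) ha]
  have htailF : ∑ i ∈ Ico (r + s) a, (1 - σ i ^ 2)⁻¹ • F i = ∑ i ∈ Ico (r + s) a, F i :=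
    sum_congr rfl fun i hi => by simp [hσ i (mem_Ico.1 hi).1]
  have htailG : ∑ i ∈ Ico (r + s) a, (σ i / (1 - σ i ^ 2)) • G i = 0 :=
    sum_eq_zero fun i hi => by simp [hσ i (mem_Ico.1 hi).1]
  rw [htailF]
  simp only [neg_smul, sum_neg_distrib, htailG, neg_zero, add_zero]
  abel

lemma transpose_mul_mul_mul {α l m m' n n' : Type*} [Fintype l] [Fintype m] [Fintype n]
    [CommSemiring α] (A : Matrix l n α) (U : Matrix n n' α) (B : Matrix l m α)
    (V : Matrix m m' α) :
    (A * U)ᵀ * (B * V) = Uᵀ * (Aᵀ * B) * V := by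
  simp only [transpose_mul, Matrix.mul_assoc]

lemma transpose_submatrix_id_mul_submatrix_id {α m n n' l l' : Type*} [Fintype m]
    [NonUnitalNonAssocSemiring α] (A : Matrix m n α) (B : Matrix m l α) (f : n' → n)
    (g : l' → l) :
    (A.submatrix id f)ᵀ * B.submatrix id g = (Aᵀ * B).submatrix f g := by
  rw [transpose_submatrix, submatrix_mul _ _ _ _ _ Function.bijective_id]

lemma gram_fromCols_submatrix_shift {α m : Type*} [Fintype m] [CommSemiring α]
    {p K q k r : ℕ} {X : Matrix m (Fin p) α} {Y : Matrix m (Fin K) α} {d : ℕ → α}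
    (hX : Xᵀ * X = 1) (hY : Yᵀ * Y = 1) (hXY : Xᵀ * Y = rectDiagonal p K d)
    (f : Fin q → Fin p) (g : Fin k → Fin K) (hf : ∀ j, (f j : ℕ) = r + j)
    (hg : ∀ j, (g j : ℕ) = r + j) :
    (fromCols (X.submatrix id f) (Y.submatrix id g))ᵀ * fromCols (X.submatrix id f) (Y.submatrix id g)
      = fromBlocks 1 (rectDiagonal q k fun i => d (r + i)) (rectDiagonal k q fun i => d (r + i)) 1 := by
  have hYX : Yᵀ * X = rectDiagonal K p d := by
    rw [← transpose_rectDiagonal, ← hXY, transpose_mul, transpose_transpose]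
  have hf' : Function.Injective f := fun a b h => Fin.ext (by simpa [hf] using congrArg Fin.val h)
  have hg' : Function.Injective g := fun a b h => Fin.ext (by simpa [hg] using congrArg Fin.val h)
  rw [transpose_fromCols, fromRows_mul_fromCols]
  simp only [transpose_submatrix_id_mul_submatrix_id, hX, hY, hXY, hYX, submatrix_one _ hf',
    submatrix_one _ hg', submatrix_rectDiagonal_shift _ f g hf hg,
    submatrix_rectDiagonal_shift _ g f hg hf]

lemma sq_lt_one_of_antitone {𝕜 : Type*} [Field 𝕜] [LinearOrder 𝕜] [IsStrictOrderedRing 𝕜]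
    {σ : ℕ → 𝕜} {r s : ℕ} (hanti : Antitone σ) (hlt : σ r < 1)
    (hpos : 0 < σ (r + s - 1)) (hzero : ∀ i, r + s ≤ i → σ i = 0) {i : ℕ} (hi : r ≤ i) :
    σ i ^ 2 < 1 := by
  have hnonneg : 0 ≤ σ i := by
    rcases lt_or_ge i (r + s) with h | h
    · exact hpos.le.trans (hanti (by omega))
    · exact (hzero i h).ge
  nlinarith [(hanti hi).trans_lt hlt]

theorem stmt_2
    (n p K r s : ℕ) (hrp : r + s ≤ p) (hrK : r + s ≤ K)
    (Z : Matrix (Fin n) (Fin p) ℝ) (W : Matrix (Fin n) (Fin K) ℝ)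
    (hZ : Zᵀ * Z = 1) (hW : Wᵀ * W = 1)
    (U : Matrix (Fin p) (Fin p) ℝ) (V : Matrix (Fin K) (Fin K) ℝ)
    (hU : Uᵀ * U = 1) (hV : Vᵀ * V = 1)
    (σ : ℕ → ℝ)
    (hσlt : σ r < 1)
    (hσanti : ∀ i j, i ≤ j → σ j ≤ σ i)
    (hσpos : 0 < σ (r + s - 1))
    (hσzero : ∀ i, r + s ≤ i → σ i = 0)
    (hSVD : Zᵀ * W
      = U * (Matrix.of fun (i : Fin p) (j : Fin K) =>
          if (i : ℕ) = (j : ℕ) then σ (i : ℕ) else 0) * Vᵀ)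
    (Zt : Matrix (Fin n) (Fin p) ℝ) (hZt : Zt = Z * U)
    (Wt : Matrix (Fin n) (Fin K) ℝ) (hWt : Wt = W * V)
    (M : Matrix (Fin n) (Fin (p - r) ⊕ Fin (K - r)) ℝ)
    (hMl : ∀ (a : Fin n) (j : Fin (p - r)),
      M a (Sum.inl j) = Zt a ⟨r + j.1, by have := j.2; omega⟩)
    (hMr : ∀ (a : Fin n) (j : Fin (K - r)),
      M a (Sum.inr j) = Wt a ⟨r + j.1, by have := j.2; omega⟩)
    (PC PN : Matrix (Fin n) (Fin n) ℝ)
    (hPC : PC = (Matrix.of fun (a : Fin n) (j : Fin (p - r) ⊕ Fin (K - r)) =>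
        Sum.elim (fun j' : Fin (p - r) => Zt a ⟨r + j'.1, by have := j'.2; omega⟩)
                 (fun _ : Fin (K - r) => (0 : ℝ)) j) * (Mᵀ * M)⁻¹ * Mᵀ)
    (hPN : PN = (Matrix.of fun (a : Fin n) (j : Fin (p - r) ⊕ Fin (K - r)) =>
        Sum.elim (fun _ : Fin (p - r) => (0 : ℝ))
                 (fun j' : Fin (K - r) => Wt a ⟨r + j'.1, by have := j'.2; omega⟩) j)
        * (Mᵀ * M)⁻¹ * Mᵀ)
    :
    PC = (∑ i ∈ (Finset.Ico r (r + s)).attach,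
            (1 - σ i.1 ^ 2)⁻¹ • Matrix.vecMulVec
              (fun a : Fin n => Zt a ⟨i.1, by have := (Finset.mem_Ico.mp i.2).2; omega⟩)
              (fun a : Fin n => Zt a ⟨i.1, by have := (Finset.mem_Ico.mp i.2).2; omega⟩))
       - (∑ i ∈ (Finset.Ico r (r + s)).attach,
            (σ i.1 / (1 - σ i.1 ^ 2)) • Matrix.vecMulVec
              (fun a : Fin n => Zt a ⟨i.1, by have := (Finset.mem_Ico.mp i.2).2; omega⟩)
              (fun a : Fin n => Wt a ⟨i.1, by have := (Finset.mem_Ico.mp i.2).2; omega⟩))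
       + (∑ i ∈ (Finset.Ico (r + s) p).attach,
            Matrix.vecMulVec
              (fun a : Fin n => Zt a ⟨i.1, (Finset.mem_Ico.mp i.2).2⟩)
              (fun a : Fin n => Zt a ⟨i.1, (Finset.mem_Ico.mp i.2).2⟩))
    ∧ PN = (∑ i ∈ (Finset.Ico r (r + s)).attach,
            (1 - σ i.1 ^ 2)⁻¹ • Matrix.vecMulVec
              (fun a : Fin n => Wt a ⟨i.1, by have := (Finset.mem_Ico.mp i.2).2; omega⟩)
              (fun a : Fin n => Wt a ⟨i.1, by have := (Finset.mem_Ico.mp i.2).2; omega⟩))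
       - (∑ i ∈ (Finset.Ico r (r + s)).attach,
            (σ i.1 / (1 - σ i.1 ^ 2)) • Matrix.vecMulVec
              (fun a : Fin n => Wt a ⟨i.1, by have := (Finset.mem_Ico.mp i.2).2; omega⟩)
              (fun a : Fin n => Zt a ⟨i.1, by have := (Finset.mem_Ico.mp i.2).2; omega⟩))
       + (∑ i ∈ (Finset.Ico (r + s) K).attach,
            Matrix.vecMulVec
              (fun a : Fin n => Wt a ⟨i.1, (Finset.mem_Ico.mp i.2).2⟩)
              (fun a : Fin n => Wt a ⟨i.1, (Finset.mem_Ico.mp i.2).2⟩)) := by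
  have hZZ : Ztᵀ * Zt = 1 := by rw [hZt, transpose_mul_mul_mul, hZ, Matrix.mul_one, hU]
  have hWW : Wtᵀ * Wt = 1 := by rw [hWt, transpose_mul_mul_mul, hW, Matrix.mul_one, hV]
  have hZW : Ztᵀ * Wt = rectDiagonal p K σ := by
    rw [hZt, hWt, transpose_mul_mul_mul, hSVD, ← Matrix.mul_assoc, ← Matrix.mul_assoc, hU,
      Matrix.one_mul, Matrix.mul_assoc, hV, Matrix.mul_one]
    rfl
  let f : Fin (p - r) → Fin p := fun j => ⟨r + j, by omega⟩
  let g : Fin (K - r) → Fin K := fun j => ⟨r + j, by omega⟩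
  have hM : M = fromCols (Zt.submatrix id f) (Wt.submatrix id g) := by
    ext a (j | j)
    · exact hMl a j
    · exact hMr a j
  have hG := inv_fromBlocks_one_rectDiagonal (q := p - r) (k := K - r) (fun i => σ (r + i))
    (fun i => (sub_pos.2 (sq_lt_one_of_antitone hσanti hσlt hσpos hσzero le_self_add)).ne')
    (fun i hi => hσzero _ (by omega))
  rw [← gram_fromCols_submatrix_shift hZZ hWW hZW f g (fun _ => rfl) (fun _ => rfl), ← hM] at hG
  have hZcol := natCol_submatrix_shift Zt f (fun _ => rfl) (show r + (p - r) = p by omega)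
  have hWcol := natCol_submatrix_shift Wt g (fun _ => rfl) (show r + (K - r) = K by omega)
  simp only [← natCol_of_lt]
  constructor
  · rw [show PC = fromCols (Zt.submatrix id f) (0 : Matrix _ (Fin (K - r)) ℝ) * (Mᵀ * M)⁻¹ * Mᵀ
      from hPC, hG, hM,
      transpose_fromCols, fromCols_mul_fromBlocks, fromCols_mul_fromRows]
    simp only [Matrix.zero_mul, add_zero, mul_rectDiagonal_mul_transpose, hZcol, hWcol]
    rw [sum_range_shift_split_of_vanishing σ (fun i => vecMulVec (natCol Zt i) (natCol Zt i))
      (fun i => vecMulVec (natCol Zt i) (natCol Wt i)) hσzero hrp, ← sum_attach (Ico r (r + s)),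
      ← sum_attach (Ico r (r + s)), ← sum_attach (Ico (r + s) p)]
  · rw [show PN = fromCols (0 : Matrix _ (Fin (p - r)) ℝ) (Wt.submatrix id g) * (Mᵀ * M)⁻¹ * Mᵀ
      from hPN, hG, hM,
      transpose_fromCols, fromCols_mul_fromBlocks, fromCols_mul_fromRows]
    simp only [Matrix.zero_mul, zero_add, mul_rectDiagonal_mul_transpose, hZcol, hWcol]
    rw [add_comm, sum_range_shift_split_of_vanishing σ
      (fun i => vecMulVec (natCol Wt i) (natCol Wt i)) (fun i => vecMulVec (natCol Wt i) (natCol Zt i))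
      hσzero hrK, ← sum_attach (Ico r (r + s)), ← sum_attach (Ico r (r + s)),
      ← sum_attach (Ico (r + s) K)]
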